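/- Let μ be a finite Borel measure on [a,b] with a,b ∈ spt μ and μ({a,b}) = 0, and let ι := (κ|_{W^1_{2,μ}(a,b)})^{−1}. If f ∈ D(ι) is real-valued, then |f| ∈ D(ι) and (ι|f|)(a) = |ιf(a)| and (ι|f|)(b) = |ιf(b)|. -/

import Mathlib

/-!
Take `w = |u|` on `spt μ` and, on each gap `(c, d)` of `spt μ` in `[a, b]`, the chord of `|u|`
over the gap. On such a gap `u` is affine because `μ (c, d) = 0`, so the chord of `|u|` is no
steeper than `u`; on `spt μ` the increments of `|u|` are bounded by those of `u`. Hence every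
increment of `w` is bounded by the corresponding increment of `∫ |u'|`, which makes `w` absolutely
continuous with `|w'| ≤ |u'|` a.e. By construction `w` is affine on every `μ`-null interval, and it
agrees with `|u|` on `spt μ`, which is conull and contains `a` and `b`.
-/

open MeasureTheory Set

/-- Membership in `W^1_{2,μ}(a,b) = W^1_2(a,b) ∩ C_μ[a,b]` (see paper, Section 1). -/
def MemW12mu (a b : ℝ) (μ : Measure ℝ) (f : ℝ → ℝ) : Prop :=
  ContinuousOn f (Set.Icc a b) ∧
  (∃ f' : ℝ → ℝ, MemLp f' 2 (volume.restrict (Set.Ioo a b)) ∧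
     ∀ x ∈ Set.Icc a b, f x = f a + ∫ t in a..x, f' t) ∧
  (∀ c d : ℝ, a ≤ c → c < d → d ≤ b → μ (Set.Ioo c d) = 0 →
     ∃ m q : ℝ, ∀ x ∈ Set.Icc c d, f x = m * x + q)

open Filter Topology intervalIntegral

theorem AbsolutelyContinuousOnInterval.of_dist_le {X Y : Type*} [PseudoMetricSpace X]
    [PseudoMetricSpace Y] {f : ℝ → X} {g : ℝ → Y} {a b : ℝ}
    (hg : AbsolutelyContinuousOnInterval g a b)
    (hfg : ∀ x ∈ uIcc a b, ∀ y ∈ uIcc a b, dist (f x) (f y) ≤ dist (g x) (g y)) :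
    AbsolutelyContinuousOnInterval f a b :=
  squeeze_zero' (Eventually.of_forall fun _ => Finset.sum_nonneg fun _ _ => dist_nonneg)
    (eventually_inf_principal.mpr (Eventually.of_forall fun _ hE =>
      Finset.sum_le_sum fun i hi => hfg _ (hE.1 i hi).1 _ (hE.1 i hi).2)) hg

theorem abs_deriv_le_of_abs_sub_le {f g : ℝ → ℝ} {g' t : ℝ} {s : Set ℝ} (hs : s ∈ 𝓝 t)
    (hfg : ∀ x ∈ s, ∀ y ∈ s, |f y - f x| ≤ |g y - g x|) (hg : HasDerivAt g g' t) :
    |deriv f t| ≤ |g'| := by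
  by_cases hf : DifferentiableAt ℝ f t
  · refine le_of_tendsto_of_tendsto (hasDerivAt_iff_tendsto_slope.mp hf.hasDerivAt).abs
      (hasDerivAt_iff_tendsto_slope.mp hg).abs ?_
    filter_upwards [nhdsWithin_le_nhds hs] with x hx
    simp only [slope_def_field, abs_div]
    exact div_le_div_of_nonneg_right (hfg t (mem_of_mem_nhds hs) x hx) (abs_nonneg _)
  · rw [deriv_zero_of_not_differentiableAt hf, abs_zero]
    exact abs_nonneg _

theorem abs_slope_abs_le (f : ℝ → ℝ) (c d : ℝ) :
    |slope (fun x => |f x|) c d| ≤ |slope f c d| := by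
  simp only [slope_def_field, abs_div]
  exact div_le_div_of_nonneg_right (abs_abs_sub_abs_le_abs_sub _ _) (abs_nonneg _)

theorem abs_sub_le_abs_sub_of_le {f g : ℝ → ℝ} {s : Set ℝ}
    (h : ∀ x ∈ s, ∀ y ∈ s, x ≤ y → |f y - f x| ≤ g y - g x) :
    ∀ x ∈ s, ∀ y ∈ s, |f y - f x| ≤ |g y - g x| := by
  intro x hx y hy
  rcases le_total x y with hxy | hyx
  · exact (h x hx y hy hxy).trans (le_abs_self _)
  · rw [abs_sub_comm, abs_sub_comm (g y)]
    exact (h y hy x hx hyx).trans (le_abs_self _)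

theorem abs_sub_le_integral_abs_of_eq_add_integral {u u' : ℝ → ℝ} {a b : ℝ}
    (hu' : IntervalIntegrable u' volume a b)
    (hu : ∀ x ∈ Icc a b, u x = u a + ∫ t in a..x, u' t) :
    ∀ x ∈ Icc a b, ∀ y ∈ Icc a b, x ≤ y →
      |u y - u x| ≤ (∫ t in a..y, |u' t|) - ∫ t in a..x, |u' t| := by
  intro x hx y hy hxy
  have hint : ∀ z ∈ Icc a b, IntervalIntegrable u' volume a z := fun z hz =>
    hu'.mono_set (uIcc_subset_uIcc left_mem_uIcc (Icc_subset_uIcc hz))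
  rw [hu y hy, hu x hx, add_sub_add_left_eq_sub, integral_interval_sub_left (hint y hy) (hint x hx),
    integral_interval_sub_left (hint y hy).abs (hint x hx).abs]
  exact abs_integral_le_integral_abs hxy

section Domination

variable {w g : ℝ → ℝ} {a b : ℝ}

theorem absolutelyContinuousOnInterval_of_abs_sub_le (hab : a ≤ b)
    (hg : IntervalIntegrable g volume a b)
    (hw : ∀ x ∈ Icc a b, ∀ y ∈ Icc a b,
      |w y - w x| ≤ |(∫ t in a..y, |g t|) - (∫ t in a..x, |g t|)|) :
    AbsolutelyContinuousOnInterval w a b :=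
  (hg.abs.absolutelyContinuousOnInterval_intervalIntegral left_mem_uIcc).of_dist_le
    fun x hx y hy => by
      rw [uIcc_of_le hab] at hx hy
      exact hw y hy x hx

theorem ae_abs_deriv_le_of_abs_sub_le (hg : IntervalIntegrable g volume a b)
    (hw : ∀ x ∈ Icc a b, ∀ y ∈ Icc a b,
      |w y - w x| ≤ |(∫ t in a..y, |g t|) - (∫ t in a..x, |g t|)|) :
    ∀ᵐ t, t ∈ Ioo a b → |deriv w t| ≤ |g t| := by
  filter_upwards [hg.abs.ae_hasDerivAt_integral] with t hV ht
  simpa only [abs_abs] using abs_deriv_le_of_abs_sub_le (Icc_mem_nhds ht.1 ht.2) hw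
    (hV (Icc_subset_uIcc (Ioo_subset_Icc_self ht)) a left_mem_uIcc)

theorem exists_memLp_deriv_of_abs_sub_le {p : ENNReal} (hab : a ≤ b)
    (hg : IntervalIntegrable g volume a b) (hgp : MemLp g p (volume.restrict (Ioo a b)))
    (hw : ∀ x ∈ Icc a b, ∀ y ∈ Icc a b,
      |w y - w x| ≤ |(∫ t in a..y, |g t|) - (∫ t in a..x, |g t|)|) :
    ContinuousOn w (Icc a b) ∧ ∃ w' : ℝ → ℝ, MemLp w' p (volume.restrict (Ioo a b)) ∧
      ∀ x ∈ Icc a b, w x = w a + ∫ t in a..x, w' t := by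
  have hac := absolutelyContinuousOnInterval_of_abs_sub_le hab hg hw
  refine ⟨uIcc_of_le hab ▸ hac.continuousOn, deriv w, ?_, fun x hx => ?_⟩
  · refine hgp.of_le (measurable_deriv w).aestronglyMeasurable ?_
    filter_upwards [ae_restrict_of_ae (ae_abs_deriv_le_of_abs_sub_le hg hw),
      ae_restrict_mem measurableSet_Ioo] with t ht htab
    simpa only [Real.norm_eq_abs] using ht htab
  · rw [(hac.mono (uIcc_subset_uIcc left_mem_uIcc (Icc_subset_uIcc hx))).integral_deriv_eq_sub]
    ring

end Domination

section Gap

variable {S : Set ℝ} {a b c d s t x y : ℝ}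

noncomputable def gapLeft (S : Set ℝ) (x : ℝ) : ℝ := sSup (S ∩ Iic x)

noncomputable def gapRight (S : Set ℝ) (x : ℝ) : ℝ := sInf (S ∩ Ici x)

/-- The chord of `f` over the gap of `S` containing `x`; for `x ∈ S` the slope is the junk value
`slope f x x = 0`. -/
noncomputable def gapInterp (S : Set ℝ) (f : ℝ → ℝ) (x : ℝ) : ℝ :=
  f (gapLeft S x) + (x - gapLeft S x) * slope f (gapLeft S x) (gapRight S x)

theorem le_gapLeft (hy : y ∈ S) (hyx : y ≤ x) : y ≤ gapLeft S x :=
  le_csSup ⟨x, fun _ h => h.2⟩ ⟨hy, hyx⟩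

theorem gapRight_le (hy : y ∈ S) (hxy : x ≤ y) : gapRight S x ≤ y :=
  csInf_le ⟨x, fun _ h => h.2⟩ ⟨hy, hxy⟩

theorem gapLeft_le (hy : y ∈ S) (hyx : y ≤ x) : gapLeft S x ≤ x :=
  csSup_le ⟨y, hy, hyx⟩ fun _ h => h.2

theorem le_gapRight (hy : y ∈ S) (hxy : x ≤ y) : x ≤ gapRight S x :=
  le_csInf ⟨y, hy, hxy⟩ fun _ h => h.2

theorem gapLeft_mem (hS : IsClosed S) (hy : y ∈ S) (hyx : y ≤ x) : gapLeft S x ∈ S :=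
  ((hS.inter isClosed_Iic).csSup_mem ⟨y, hy, hyx⟩ ⟨x, fun _ h => h.2⟩).1

theorem gapRight_mem (hS : IsClosed S) (hy : y ∈ S) (hxy : x ≤ y) : gapRight S x ∈ S :=
  ((hS.inter isClosed_Ici).csInf_mem ⟨y, hy, hxy⟩ ⟨x, fun _ h => h.2⟩).1

theorem gapLeft_of_mem (hx : x ∈ S) : gapLeft S x = x :=
  le_antisymm (gapLeft_le hx le_rfl) (le_gapLeft hx le_rfl)

theorem gapRight_of_mem (hx : x ∈ S) : gapRight S x = x :=
  le_antisymm (gapRight_le hx le_rfl) (le_gapRight hx le_rfl)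

theorem gapInterp_of_mem (f : ℝ → ℝ) (hx : x ∈ S) : gapInterp S f x = f x := by
  simp [gapInterp, gapLeft_of_mem hx, gapRight_of_mem hx]

theorem disjoint_Ioo_gapLeft_gapRight (S : Set ℝ) (x : ℝ) :
    Disjoint (Ioo (gapLeft S x) (gapRight S x)) S := by
  refine disjoint_left.mpr fun y hy hyS => ?_
  rcases le_total y x with hyx | hxy
  · exact (le_gapLeft hyS hyx).not_gt hy.1
  · exact (gapRight_le hyS hxy).not_gt hy.2

theorem gapLeft_le_of_disjoint (hgap : Disjoint (Ioo c d) S) (hy : y ∈ S) (hyx : y ≤ x)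
    (hxd : x < d) : gapLeft S x ≤ c :=
  csSup_le ⟨y, hy, hyx⟩ fun _ hz =>
    not_lt.mp fun hcz => disjoint_left.mp hgap ⟨hcz, hz.2.trans_lt hxd⟩ hz.1

theorem le_gapRight_of_disjoint (hgap : Disjoint (Ioo c d) S) (hy : y ∈ S) (hxy : x ≤ y)
    (hcx : c < x) : d ≤ gapRight S x :=
  le_csInf ⟨y, hy, hxy⟩ fun _ hz =>
    not_lt.mp fun hzd => disjoint_left.mp hgap ⟨hcx.trans_le hz.2, hzd⟩ hz.1

theorem gapInterp_eq_of_mem_Icc (f : ℝ → ℝ) (hc : c ∈ S) (hd : d ∈ S)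
    (hgap : Disjoint (Ioo c d) S) (hx : x ∈ Icc c d) :
    gapInterp S f x = f c + (x - c) * slope f c d := by
  rcases eq_or_lt_of_le hx.1 with rfl | hcx
  · simp [gapInterp_of_mem f hc]
  rcases eq_or_lt_of_le hx.2 with rfl | hxd
  · rw [gapInterp_of_mem f hd, ← smul_eq_mul, sub_smul_slope, vsub_eq_sub]
    ring
  have hleft : gapLeft S x = c :=
    le_antisymm (gapLeft_le_of_disjoint hgap hc hcx.le hxd) (le_gapLeft hc hcx.le)
  have hright : gapRight S x = d :=
    le_antisymm (gapRight_le hd hxd.le) (le_gapRight_of_disjoint hgap hd hxd.le hcx)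
  rw [gapInterp, hleft, hright]

theorem exists_affine_gapInterp (f : ℝ → ℝ) (hS : IsClosed S) (ha : a ∈ S) (hb : b ∈ S)
    (hac : a ≤ c) (hcd : c < d) (hdb : d ≤ b) (hgap : Disjoint (Ioo c d) S) :
    ∃ m q : ℝ, ∀ x ∈ Icc c d, gapInterp S f x = m * x + q := by
  obtain ⟨x₀, hcx₀, hx₀d⟩ := nonempty_Ioo.mpr hcd
  have hleft := gapLeft_le_of_disjoint hgap ha (hac.trans hcx₀.le) hx₀d
  have hright := le_gapRight_of_disjoint hgap hb (hx₀d.le.trans hdb) hcx₀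
  refine ⟨slope f (gapLeft S x₀) (gapRight S x₀),
    f (gapLeft S x₀) - gapLeft S x₀ * slope f (gapLeft S x₀) (gapRight S x₀), fun x hx => ?_⟩
  rw [gapInterp_eq_of_mem_Icc f (gapLeft_mem hS ha (hac.trans hcx₀.le))
    (gapRight_mem hS hb (hx₀d.le.trans hdb)) (disjoint_Ioo_gapLeft_gapRight S x₀)
    ⟨hleft.trans hx.1, hx.2.trans hright⟩]
  ring

theorem abs_gapInterp_abs_sub_le {u : ℝ → ℝ} (hc : c ∈ S) (hd : d ∈ S) (hcd : c < d)
    (hgap : Disjoint (Ioo c d) S) (hu : ∃ m q : ℝ, ∀ x ∈ Icc c d, u x = m * x + q)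
    (hs : s ∈ Icc c d) (ht : t ∈ Icc c d) :
    |gapInterp S (fun x => |u x|) t - gapInterp S (fun x => |u x|) s| ≤ |u t - u s| := by
  obtain ⟨m, q, hmq⟩ := hu
  have hslope : slope u c d = m := by
    rw [slope_def_field, hmq d (right_mem_Icc.mpr hcd.le), hmq c (left_mem_Icc.mpr hcd.le)]
    field_simp [sub_ne_zero.mpr hcd.ne']
    ring
  rw [gapInterp_eq_of_mem_Icc _ hc hd hgap ht, gapInterp_eq_of_mem_Icc _ hc hd hgap hs,
    hmq t ht, hmq s hs]
  calc _ = |t - s| * |slope (fun x => |u x|) c d| := by rw [← abs_mul]; ring_nf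
    _ ≤ |t - s| * |slope u c d| := mul_le_mul_of_nonneg_left (abs_slope_abs_le u c d) (abs_nonneg _)
    _ = |m * t + q - (m * s + q)| := by rw [hslope, ← abs_mul]; ring_nf

theorem abs_sub_le_of_abs_sub_le_on_gaps {F V : ℝ → ℝ} (hS : IsClosed S) (ha : a ∈ S)
    (hb : b ∈ S)
    (hgap : ∀ c ∈ S, ∀ d ∈ S, a ≤ c → c < d → d ≤ b → Disjoint (Ioo c d) S →
      ∀ s ∈ Icc c d, ∀ t ∈ Icc c d, s ≤ t → |F t - F s| ≤ V t - V s)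
    (hmem : ∀ s ∈ S ∩ Icc a b, ∀ t ∈ S ∩ Icc a b, s ≤ t → |F t - F s| ≤ V t - V s) :
    ∀ x ∈ Icc a b, ∀ y ∈ Icc a b, x ≤ y → |F y - F x| ≤ V y - V x := by
  have hpiece : ∀ x ∈ Icc a b, ∀ s ∈ Icc (gapLeft S x) (gapRight S x),
      ∀ t ∈ Icc (gapLeft S x) (gapRight S x), s ≤ t → |F t - F s| ≤ V t - V s := by
    intro x hx s hs t ht hst
    rcases hst.eq_or_lt with rfl | hst
    · simp
    exact hgap _ (gapLeft_mem hS ha hx.1) _ (gapRight_mem hS hb hx.2) (le_gapLeft ha hx.1)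
      ((hs.1.trans_lt hst).trans_le ht.2) (gapRight_le hb hx.2)
      (disjoint_Ioo_gapLeft_gapRight S x) s hs t ht hst.le
  intro x hx y hy hxy
  have hxx : x ∈ Icc (gapLeft S x) (gapRight S x) := ⟨gapLeft_le ha hx.1, le_gapRight hb hx.2⟩
  have hyy : y ∈ Icc (gapLeft S y) (gapRight S y) := ⟨gapLeft_le ha hy.1, le_gapRight hb hy.2⟩
  by_cases hyd : y ≤ gapRight S x
  · exact hpiece x hx x hxx y ⟨hxx.1.trans hxy, hyd⟩ hxy
  -- split `[x, y]` at the end `d` of the gap of `x` and the start `c` of the gap of `y`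
  set d := gapRight S x
  set c := gapLeft S y
  have hdc : d ≤ c := le_gapLeft (gapRight_mem hS hb hx.2) (not_le.mp hyd).le
  have hxd := hpiece x hx x hxx d ⟨hxx.1.trans hxx.2, le_rfl⟩ hxx.2
  have hdc' := hmem d ⟨gapRight_mem hS hb hx.2, hx.1.trans hxx.2, gapRight_le hb hx.2⟩
    c ⟨gapLeft_mem hS ha hy.1, le_gapLeft ha hy.1, hyy.1.trans hy.2⟩ hdc
  have hcy := hpiece y hy c ⟨le_rfl, hyy.1.trans hyy.2⟩ y hyy hyy.1
  linarith [abs_sub_le (F y) (F c) (F x), abs_sub_le (F c) (F d) (F x)]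

end Gap

theorem MeasureTheory.Measure.mem_support_of_forall_Ico_pos {μ : Measure ℝ} {a : ℝ}
    (h : ∀ ε > 0, 0 < μ (Ico a (a + ε))) : a ∈ μ.support := by
  refine (Measure.mem_support_iff_forall a).mpr fun U hU => ?_
  obtain ⟨ε, hε, hball⟩ := Metric.mem_nhds_iff.mp hU
  refine (h ε hε).trans_le (measure_mono (Subset.trans ?_ hball))
  rw [Real.ball_eq_Ioo]
  exact Ico_subset_Ioo_left (by linarith)

theorem MeasureTheory.Measure.mem_support_of_forall_Ioc_pos {μ : Measure ℝ} {b : ℝ}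
    (h : ∀ ε > 0, 0 < μ (Ioc (b - ε) b)) : b ∈ μ.support := by
  refine (Measure.mem_support_iff_forall b).mpr fun U hU => ?_
  obtain ⟨ε, hε, hball⟩ := Metric.mem_nhds_iff.mp hU
  refine (h ε hε).trans_le (measure_mono (Subset.trans ?_ hball))
  rw [Real.ball_eq_Ioo]
  exact Ioc_subset_Ioo_right (by linarith)

theorem abs_gapInterp_support_sub_le {μ : Measure ℝ} {a b : ℝ} {u u' : ℝ → ℝ}
    (ha : a ∈ μ.support) (hb : b ∈ μ.support) (hu'i : IntervalIntegrable u' volume a b)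
    (hu' : ∀ x ∈ Icc a b, u x = u a + ∫ t in a..x, u' t)
    (hu_aff : ∀ c d : ℝ, a ≤ c → c < d → d ≤ b → μ (Ioo c d) = 0 →
      ∃ m q : ℝ, ∀ x ∈ Icc c d, u x = m * x + q) :
    ∀ x ∈ Icc a b, ∀ y ∈ Icc a b, x ≤ y →
      |gapInterp μ.support (fun x => |u x|) y - gapInterp μ.support (fun x => |u x|) x| ≤
        (∫ t in a..y, |u' t|) - ∫ t in a..x, |u' t| := by
  have hu_V := abs_sub_le_integral_abs_of_eq_add_integral hu'i hu'
  refine abs_sub_le_of_abs_sub_le_on_gaps Measure.isClosed_support ha hb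
    (fun c hc d hd hac hcd hdb hgap s hs t ht hst => ?_) (fun s hs t ht hst => ?_)
  · have hnull : μ (Ioo c d) = 0 :=
      measure_mono_null (subset_compl_iff_disjoint_right.mpr hgap) Measure.measure_compl_support
    exact (abs_gapInterp_abs_sub_le hc hd hcd hgap (hu_aff c d hac hcd hdb hnull) hs ht).trans
      (hu_V s ⟨hac.trans hs.1, hs.2.trans hdb⟩ t ⟨hac.trans ht.1, ht.2.trans hdb⟩ hst)
  · rw [gapInterp_of_mem _ hs.1, gapInterp_of_mem _ ht.1]
    exact (abs_abs_sub_abs_le_abs_sub _ _).trans (hu_V s hs.2 t ht.2 hst)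

theorem iota_abs_general (a b : ℝ) (hab : a < b) (μ : Measure ℝ)
    (hsa : ∀ ε > 0, 0 < μ (Set.Ico a (a + ε)))
    (hsb : ∀ ε > 0, 0 < μ (Set.Ioc (b - ε) b))
    (u : ℝ → ℝ) (hu : MemW12mu a b μ u) :
    ∃ w : ℝ → ℝ, MemW12mu a b μ w ∧ w =ᵐ[μ] (fun x => |u x|) ∧
      w a = |u a| ∧ w b = |u b| := by
  obtain ⟨-, ⟨u', hu'2, hu'⟩, hu_aff⟩ := hu
  have ha := Measure.mem_support_of_forall_Ico_pos hsa
  have hb := Measure.mem_support_of_forall_Ioc_pos hsb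
  have hu'i : IntervalIntegrable u' volume a b := by
    rw [intervalIntegrable_iff_integrableOn_Ioo_of_le hab.le]
    exact hu'2.integrable one_le_two
  obtain ⟨hw_cont, hw_deriv⟩ := exists_memLp_deriv_of_abs_sub_le hab.le hu'i hu'2
    (abs_sub_le_abs_sub_of_le (abs_gapInterp_support_sub_le ha hb hu'i hu' hu_aff))
  refine ⟨_, ⟨hw_cont, hw_deriv, fun c d hac hcd hdb h0 => ?_⟩,
    mem_of_superset Measure.support_mem_ae fun x hx => gapInterp_of_mem _ hx,
    gapInterp_of_mem _ ha, gapInterp_of_mem _ hb⟩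
  exact exists_affine_gapInterp _ Measure.isClosed_support ha hb hac hcd hdb
    (subset_compl_iff_disjoint_right.mp (Measure.subset_compl_support_of_isOpen isOpen_Ioo h0))

/-- **Absolute value and the map `ι`.**
Let `μ` be a finite Borel measure on `[a,b]` with `a, b ∈ spt μ`, `μ({a,b}) = 0`, and let
`ι = (κ|_{W^1_{2,μ}})^{-1}`.  If `f ∈ D(ι)` is real-valued with `ι f = u ∈ W^1_{2,μ}(a,b)`,
then `|f| ∈ D(ι)` — i.e. there is `w ∈ W^1_{2,μ}(a,b)` with `w = |u|` `μ`-a.e., so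
`w = ι |f|` — and `(ι|f|)(a) = |ιf(a)|`, `(ι|f|)(b) = |ιf(b)|`. -/
theorem iota_abs (a b : ℝ) (hab : a < b) (μ : Measure ℝ) [IsFiniteMeasure μ]
    (hμc : μ (Set.Icc a b)ᶜ = 0)
    (hsa : ∀ ε > 0, 0 < μ (Set.Ico a (a + ε)))
    (hsb : ∀ ε > 0, 0 < μ (Set.Ioc (b - ε) b))
    (hab0 : μ {a, b} = 0)
    (u : ℝ → ℝ) (hu : MemW12mu a b μ u) :
    ∃ w : ℝ → ℝ, MemW12mu a b μ w ∧ w =ᵐ[μ] (fun x => |u x|) ∧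
      w a = |u a| ∧ w b = |u b| :=
  iota_abs_general a b hab μ hsa hsb u hu
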